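/- Let γ₁ ≠ γ₂ be positive reals and q₁, q₂ > 0 with q₁ + q₂ = 1. Then the function θ ↦ q₁ p_{γ₁}(θ) - q₂ p_{γ₂}(θ) on [-π,π] is not identically zero, where p_γ is the wrapped normal distribution. -/

import Mathlib

/-!
Periodization turns the Fourier coefficients of the wrapped normal density into those of the normal
density: `∫_{-π}^{π} cos (n θ) p_γ(θ) dθ = ∫_ℝ cos (n x) e^{-x²/2γ} / √(2πγ) dx = e^{-γ n²/2}`.
If `q₁ p_{γ₁} = q₂ p_{γ₂}` on `[-π, π]`, the coefficients `n = 0` and `n = 1` give `q₁ = q₂` and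
then `e^{-γ₁/2} = e^{-γ₂/2}`.
-/

open MeasureTheory Real

noncomputable def wrappedNormal (γ θ : ℝ) : ℝ :=
  (1 / Real.sqrt (2 * Real.pi * γ)) * ∑' k : ℤ, Real.exp (-(θ + 2 * Real.pi * k) ^ 2 / (2 * γ))

open Set

theorem integral_cos_mul_mul_exp_neg_mul_sq {b : ℝ} (hb : 0 < b) (t : ℝ) :
    ∫ x : ℝ, cos (t * x) * exp (-b * x ^ 2) = √(π / b) * exp (-t ^ 2 / (4 * b)) := by
  have hb' : (0 : ℝ) < (b : ℂ).re := by simpa using hb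
  have hint : Integrable fun x : ℝ => Complex.exp (Complex.I * t * x) * Complex.exp (-b * x ^ 2) :=
    (integrable_cexp_quadratic hb' (Complex.I * t) 0).congr <| .of_forall fun x => by
      simp only [← Complex.exp_add]; ring_nf
  have h := congrArg Complex.re (fourierIntegral_gaussian hb' t)
  rw [← RCLike.re_eq_complex_re, ← integral_re hint] at h
  convert h using 1
  · refine integral_congr_ae (.of_forall fun x => ?_)
    dsimp only
    rw [show Complex.I * t * x = ((t * x : ℝ) : ℂ) * Complex.I by push_cast; ring,
      show -(b : ℂ) * (x : ℂ) ^ 2 = ((-b * x ^ 2 : ℝ) : ℂ) by push_cast; ring,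
      ← Complex.ofReal_exp, RCLike.re_eq_complex_re, Complex.re_mul_ofReal,
      Complex.exp_ofReal_mul_I_re]
  · have hsqrt : ((π : ℂ) / b) ^ (1 / 2 : ℂ) = (√(π / b) : ℝ) := by
      rw [sqrt_eq_rpow, Complex.ofReal_cpow (by positivity)]
      push_cast
      rfl
    rw [hsqrt, show -(t : ℂ) ^ 2 / (4 * b) = ((-t ^ 2 / (4 * b) : ℝ) : ℂ) by push_cast; ring,
      ← Complex.ofReal_exp, ← Complex.ofReal_mul, RCLike.re_eq_complex_re, Complex.ofReal_re]

section Periodization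

variable {E : Type*} [NormedAddCommGroup E] [NormedSpace ℝ E] {f : ℝ → E} {T : ℝ}

theorem MeasureTheory.Integrable.hasSum_setIntegral_Ioc_comp_add_int_mul (hf : Integrable f)
    (hT : 0 < T) (t : ℝ) :
    HasSum (fun k : ℤ => ∫ x in Ioc t (t + T), f (x + k * T)) (∫ x, f x) := by
  have h := hasSum_integral_iUnion (fun k : ℤ => measurableSet_Ioc)
    (pairwise_disjoint_Ioc_add_zsmul t T) (hf.integrableOn (s := ⋃ k : ℤ, _))
  rw [iUnion_Ioc_add_zsmul hT, Measure.restrict_univ] at h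
  refine h.congr_fun fun k => ?_
  rw [← intervalIntegral.integral_of_le (by linarith), intervalIntegral.integral_comp_add_right,
    intervalIntegral.integral_of_le (by linarith), zsmul_eq_mul, zsmul_eq_mul]
  congr 3
  push_cast
  ring

theorem MeasureTheory.Integrable.setIntegral_Ioc_tsum_comp_add_int_mul (hf : Integrable f)
    (hT : 0 < T) (t : ℝ) : ∫ x in Ioc t (t + T), ∑' k : ℤ, f (x + k * T) = ∫ x, f x :=
  (hasSum_integral_of_summable_integral_norm (fun _ => (hf.comp_add_right _).restrict)
    (hf.norm.hasSum_setIntegral_Ioc_comp_add_int_mul hT t).summable).unique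
    (hf.hasSum_setIntegral_Ioc_comp_add_int_mul hT t)

end Periodization

theorem integral_cos_int_mul_mul_wrappedNormal {γ : ℝ} (hγ : 0 < γ) (n : ℤ) :
    ∫ θ in Ioc (-π) π, cos (n * θ) * wrappedNormal γ θ = exp (-γ * n ^ 2 / 2) := by
  set g : ℝ → ℝ := fun x => cos (n * x) * exp (-(1 / (2 * γ)) * x ^ 2)
  have hg : Integrable g :=
    (integrable_exp_neg_mul_sq (by positivity)).bdd_mul (c := 1) (by fun_prop)
      (.of_forall fun x => by simpa using abs_cos_le_one _)
  have hperiod (θ : ℝ) :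
      cos (n * θ) * ∑' k : ℤ, exp (-(θ + 2 * π * k) ^ 2 / (2 * γ)) =
        ∑' k : ℤ, g (θ + k * (2 * π)) := by
    rw [← tsum_mul_left]
    refine tsum_congr fun k => ?_
    have : (n : ℝ) * (θ + k * (2 * π)) = n * θ + (n * k : ℤ) * (2 * π) := by push_cast; ring
    simp only [g, this, cos_add_int_mul_two_pi]
    congr 2
    field_simp
  calc ∫ θ in Ioc (-π) π, cos (n * θ) * wrappedNormal γ θ
      = 1 / √(2 * π * γ) * ∫ θ in Ioc (-π) (-π + 2 * π), ∑' k : ℤ, g (θ + k * (2 * π)) := by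
        rw [← integral_const_mul, show -π + 2 * π = π by ring]
        refine setIntegral_congr_fun measurableSet_Ioc fun θ _ => ?_
        rw [wrappedNormal, ← hperiod]
        ring
    _ = 1 / √(2 * π * γ) * (√(π / (1 / (2 * γ))) * exp (-n ^ 2 / (4 * (1 / (2 * γ))))) := by
        rw [hg.setIntegral_Ioc_tsum_comp_add_int_mul two_pi_pos,
          integral_cos_mul_mul_exp_neg_mul_sq (by positivity)]
    _ = exp (-γ * n ^ 2 / 2) := by
        rw [show π / (1 / (2 * γ)) = 2 * π * γ by field_simp,
          show -(n : ℝ) ^ 2 / (4 * (1 / (2 * γ))) = -γ * n ^ 2 / 2 by field_simp; ring]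
        field_simp

theorem wrappedNormal_diff_ne_zero_general (γ₁ γ₂ q₁ q₂ : ℝ)
    (hγ₁ : 0 < γ₁) (hγ₂ : 0 < γ₂) (hne : γ₁ ≠ γ₂)
    (hq₂ : 0 < q₂) :
    ¬ ∀ θ ∈ Set.Icc (-Real.pi) Real.pi,
        q₁ * wrappedNormal γ₁ θ - q₂ * wrappedNormal γ₂ θ = 0 := by
  intro h
  have hcoeff (n : ℤ) : q₁ * exp (-γ₁ * n ^ 2 / 2) = q₂ * exp (-γ₂ * n ^ 2 / 2) := by
    rw [← integral_cos_int_mul_mul_wrappedNormal hγ₁, ← integral_cos_int_mul_mul_wrappedNormal hγ₂,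
      ← integral_const_mul, ← integral_const_mul]
    refine setIntegral_congr_fun measurableSet_Ioc fun θ hθ => ?_
    linear_combination cos (n * θ) * h θ (Ioc_subset_Icc_self hθ)
  have hq : q₁ = q₂ := by simpa using hcoeff 0
  have hexp : exp (-γ₁ / 2) = exp (-γ₂ / 2) := by
    simpa [hq, hq₂.ne'] using hcoeff 1
  exact hne (by linarith [exp_injective hexp])

/-- For `γ₁ ≠ γ₂`, the weighted difference of wrapped normal distributions is not
identically zero on `[-π, π]`. -/
theorem wrappedNormal_diff_ne_zero (γ₁ γ₂ q₁ q₂ : ℝ)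
    (hγ₁ : 0 < γ₁) (hγ₂ : 0 < γ₂) (hne : γ₁ ≠ γ₂)
    (hq₁ : 0 < q₁) (hq₂ : 0 < q₂) (hq : q₁ + q₂ = 1) :
    ¬ ∀ θ ∈ Set.Icc (-Real.pi) Real.pi,
        q₁ * wrappedNormal γ₁ θ - q₂ * wrappedNormal γ₂ θ = 0 :=
  wrappedNormal_diff_ne_zero_general γ₁ γ₂ q₁ q₂ hγ₁ hγ₂ hne hq₂
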